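/- The function M is twice continuously differentiable on (0,∞)^N and satisfies the partial differential equation (L_Φ M)(φ) − λ M(φ) = Σ_{i=1}^N p_i φ_i − λ/c for every φ ∈ (0,∞)^N. -/

import Mathlib

open MeasureTheory Set
open scoped ENNReal NNReal BigOperators

noncomputable section

/-- The function `M̃` appearing in the Mayer reformulation (with diffusion
coefficient `ν`), where `κ := 2 λ / ν`. -/
def Mtilde (ν lam : ℝ) (x : ℝ) : ℝ :=
  (2 / ν) * (1 + x) *
    ∫ v in Set.Ioc (0 : ℝ) (x / (1 + x)),
      ((1 - v) / v) ^ (2 * lam / ν) * Real.exp ((2 * lam / ν) / v) *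
        ∫ u in Set.Ioc (0 : ℝ) v,
          u ^ (2 * lam / ν - 1) * (1 - u) ^ (-(2 * lam / ν) - 2) *
            Real.exp (-(2 * lam / ν) / u)

/-- The function `M(φ) = Σ_i p_i M̃(φ_i) + 1/c`. -/
def MM {N : ℕ} (ν lam c : ℝ) (p : Fin N → ℝ) (φ : Fin N → ℝ) : ℝ :=
  (∑ i, p i * Mtilde ν lam (φ i)) + 1 / c

/-- The infinitesimal generator `L_Φ` of the process `Φ`. -/
def genLPhi {n N : ℕ} (lam μ : ℝ) (S : Fin N → Finset (Fin n))
    (f : (Fin N → ℝ) → ℝ) (φ : Fin N → ℝ) : ℝ :=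
  (∑ i, lam * (1 + φ i) * fderiv ℝ f φ (Pi.single i 1)) +
    (μ ^ 2 / 2) * ∑ i, ∑ j, ((S i ∩ S j).card : ℝ) * φ i * φ j *
      fderiv ℝ (fun ψ => fderiv ℝ f ψ (Pi.single i 1)) φ (Pi.single j 1)

/-!
Write `κ = 2λ/ν`, `h(u) = u^(κ-1) (1-u)^(-κ-2) e^(-κ/u)`, `G(v) = ∫₀^v h`,
`w(v) = ((1-v)/v)^κ e^(κ/v)`, `g = w G` and `F(y) = ∫₀^y g`, so that `M̃(x) = (2/ν)(1+x) F(x/(1+x))`.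
The integrals converge at `0` because `h(u) ≤ C u^(κ-1)` and hence `g(v) ≤ 1/(κ (1-v)²)`.
Since `w' = -κ w / (v²(1-v))` and `w h = 1/(v(1-v)²)`, `g` solves `v²(1-v) g' + κ g = v/(1-v)`;
the substitution `y = x/(1+x)` turns this into `κ(1+x) m' + x² m'' - κ m = x` for
`m(x) = (1+x) F(y)`, which is the ODE `λ(1+x) M̃' + (ν/2) x² M̃'' - λ M̃ = x`.
As `M` is a weighted sum of `M̃` in separate coordinates, its Hessian is diagonal, the generator sees
only `|S_i ∩ S_i| = k`, and `L_Φ M - λ M` reduces coordinatewise to that ODE.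
-/

open Real Filter Topology

lemma integrableOn_Ioc_zero_rpow {r v : ℝ} (hr : -1 < r) (hv : 0 ≤ v) :
    IntegrableOn (fun u : ℝ => u ^ r) (Ioc 0 v) :=
  (intervalIntegrable_iff_integrableOn_Ioc_of_le hv).1 (intervalIntegral.intervalIntegrable_rpow' hr)

lemma hasDerivAt_setIntegral_Ioc {f : ℝ → ℝ} {s : Set ℝ} {a v : ℝ} (hs : IsOpen s)
    (hf : ContinuousOn f s) (hv : v ∈ s) (hav : a < v) (hint : IntegrableOn f (Ioc a v)) :
    HasDerivAt (fun w => ∫ u in Ioc a w, f u) (f v) v := by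
  have hii : IntervalIntegrable f volume a v :=
    (intervalIntegrable_iff_integrableOn_Ioc_of_le hav.le).2 hint
  refine (intervalIntegral.integral_hasDerivAt_right hii (hf.stronglyMeasurableAtFilter hs v hv)
    (hf.continuousAt (hs.mem_nhds hv))).congr_of_eventuallyEq ?_
  filter_upwards [Ioi_mem_nhds hav] with w hw
  exact (intervalIntegral.integral_of_le hw.le).symm

lemma integrableOn_of_continuousOn_of_norm_le {f g : ℝ → ℝ} {s t : Set ℝ}
    (hf : ContinuousOn f s) (ht : MeasurableSet t) (hts : t ⊆ s) (hg : IntegrableOn g t)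
    (hfg : ∀ u ∈ t, ‖f u‖ ≤ g u) : IntegrableOn f t :=
  hg.mono' ((hf.mono hts).aestronglyMeasurable ht) ((ae_restrict_iff' ht).2 (ae_of_all _ hfg))

lemma contDiffOn_two_of_hasDerivAt {f f' f'' : ℝ → ℝ} {s : Set ℝ} (hs : IsOpen s)
    (hf : ∀ x ∈ s, HasDerivAt f (f' x) x) (hf' : ∀ x ∈ s, HasDerivAt f' (f'' x) x)
    (hf'' : ContinuousOn f'' s) : ContDiffOn ℝ 2 f s := by
  rw [show (2 : WithTop ℕ∞) = 1 + 1 from rfl, contDiffOn_succ_iff_deriv_of_isOpen hs]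
  refine ⟨fun x hx => (hf x hx).differentiableAt.differentiableWithinAt, by simp,
    ContDiffOn.congr ?_ fun x hx => (hf x hx).deriv⟩
  rw [show (1 : WithTop ℕ∞) = 0 + 1 from rfl, contDiffOn_succ_iff_deriv_of_isOpen hs]
  exact ⟨fun x hx => (hf' x hx).differentiableAt.differentiableWithinAt, by simp,
    (contDiffOn_zero.2 hf'').congr fun x hx => (hf' x hx).deriv⟩

section Separable

variable {N : ℕ} {f f' f'' : ℝ → ℝ} {p : Fin N → ℝ} {C : ℝ} {φ : Fin N → ℝ}

lemma isOpen_setOf_forall_pos : IsOpen {φ : Fin N → ℝ | ∀ i, 0 < φ i} := by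
  simpa only [ofPred_forall] using
    isOpen_iInter_of_finite fun i => isOpen_lt continuous_const (continuous_apply i)

lemma hasFDerivAt_comp_apply {g : ℝ → ℝ} {g' : ℝ} (i : Fin N) (hg : HasDerivAt g g' (φ i)) :
    HasFDerivAt (fun ψ : Fin N → ℝ => g (ψ i))
      (g' • ContinuousLinearMap.proj (R := ℝ) (φ := fun _ => ℝ) i) φ :=
  hg.comp_hasFDerivAt (f := fun ψ : Fin N → ℝ => ψ i) φ (hasFDerivAt_apply i φ)

lemma hasFDerivAt_sum_mul_comp (hf : ∀ i, HasDerivAt f (f' (φ i)) (φ i)) :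
    HasFDerivAt (fun ψ : Fin N → ℝ => (∑ i, p i * f (ψ i)) + C)
      (∑ i, (p i * f' (φ i)) • ContinuousLinearMap.proj (R := ℝ) (φ := fun _ => ℝ) i) φ := by
  refine (HasFDerivAt.fun_sum fun i _ => ?_).add_const C
  rw [← smul_smul]
  exact (hasFDerivAt_comp_apply i (hf i)).const_mul (p i)

lemma fderiv_sum_mul_comp_apply_single (hf : ∀ i, HasDerivAt f (f' (φ i)) (φ i)) (j : Fin N) :
    fderiv ℝ (fun ψ : Fin N → ℝ => (∑ i, p i * f (ψ i)) + C) φ (Pi.single j 1) =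
      p j * f' (φ j) := by
  simp [(hasFDerivAt_sum_mul_comp hf).fderiv, Pi.single_apply]

lemma fderiv_fderiv_sum_mul_comp_apply_single (hf : ∀ x, 0 < x → HasDerivAt f (f' x) x)
    (hf' : ∀ x, 0 < x → HasDerivAt f' (f'' x) x) (hφ : ∀ i, 0 < φ i) (i j : Fin N) :
    fderiv ℝ (fun ψ => fderiv ℝ (fun ψ : Fin N → ℝ => (∑ i, p i * f (ψ i)) + C) ψ
      (Pi.single i 1)) φ (Pi.single j 1) = p i * f'' (φ i) * (Pi.single i 1 : Fin N → ℝ) j := by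
  have hloc : (fun ψ => fderiv ℝ (fun ψ : Fin N → ℝ => (∑ i, p i * f (ψ i)) + C) ψ
      (Pi.single i 1)) =ᶠ[𝓝 φ] fun ψ => p i * f' (ψ i) := by
    filter_upwards [isOpen_setOf_forall_pos.mem_nhds hφ] with ψ hψ
    exact fderiv_sum_mul_comp_apply_single (fun i => hf _ (hψ i)) i
  rw [hloc.fderiv_eq, ((hasFDerivAt_comp_apply i (hf' _ (hφ i))).const_mul (p i)).fderiv]
  simp [Pi.single_apply, eq_comm]

lemma genLPhi_sum_mul_comp_sub {n : ℕ} (lam μ : ℝ) (S : Fin N → Finset (Fin n))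
    (hf : ∀ x, 0 < x → HasDerivAt f (f' x) x) (hf' : ∀ x, 0 < x → HasDerivAt f' (f'' x) x)
    (hφ : ∀ i, 0 < φ i) :
    genLPhi lam μ S (fun ψ => (∑ i, p i * f (ψ i)) + C) φ
        - lam * ((∑ i, p i * f (φ i)) + C) =
      ∑ i, p i * (lam * (1 + φ i) * f' (φ i) + μ ^ 2 / 2 * (S i).card * φ i ^ 2 * f'' (φ i)
        - lam * f (φ i)) - lam * C := by
  have hdiag : ∀ i, ∑ j, ((S i ∩ S j).card : ℝ) * φ i * φ j *
      (p i * f'' (φ i) * (Pi.single i 1 : Fin N → ℝ) j) =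
      (S i).card * φ i ^ 2 * (p i * f'' (φ i)) := fun i => by
    simp [Pi.single_apply, sq, mul_assoc]
  simp only [genLPhi, fderiv_sum_mul_comp_apply_single (fun i => hf _ (hφ i)),
    fderiv_fderiv_sum_mul_comp_apply_single hf hf' hφ, hdiag]
  rw [Finset.mul_sum, ← Finset.sum_add_distrib, mul_add, Finset.mul_sum, sub_add_eq_sub_sub,
    ← Finset.sum_sub_distrib]
  congr 1
  exact Finset.sum_congr rfl fun i _ => by ring

lemma contDiffOn_sum_mul_comp {n : WithTop ℕ∞} (hf : ContDiffOn ℝ n f (Ioi 0)) :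
    ContDiffOn ℝ n (fun ψ : Fin N → ℝ => (∑ i, p i * f (ψ i)) + C) {φ | ∀ i, 0 < φ i} := by
  refine (ContDiffOn.sum fun i _ => contDiffOn_const.mul ?_).add contDiffOn_const
  exact hf.comp (contDiff_apply ℝ ℝ i).contDiffOn fun _ hφ => hφ i

end Separable

namespace Mtilde

variable {κ : ℝ}

def kernel (κ u : ℝ) : ℝ := u ^ (κ - 1) * (1 - u) ^ (-κ - 2) * exp (-κ / u)

def innerIntegral (κ v : ℝ) : ℝ := ∫ u in Ioc 0 v, kernel κ u

def weight (κ v : ℝ) : ℝ := ((1 - v) / v) ^ κ * exp (κ / v)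

def outerIntegrand (κ v : ℝ) : ℝ := weight κ v * innerIntegral κ v

def outerIntegral (κ y : ℝ) : ℝ := ∫ v in Ioc 0 y, outerIntegrand κ v

lemma continuousOn_kernel : ContinuousOn (kernel κ) (Ioo 0 1) := by
  intro u ⟨hu0, hu1⟩
  have h1u : 1 - u ≠ 0 := by linarith
  exact ((((continuousAt_id.rpow_const (Or.inl hu0.ne')).mul
    ((continuousAt_const.sub continuousAt_id).rpow_const (Or.inl h1u))).mul
    (continuousAt_const.div continuousAt_id hu0.ne').rexp)).continuousWithinAt

lemma kernel_nonneg {u : ℝ} (hu0 : 0 < u) (hu1 : u < 1) : 0 ≤ kernel κ u := by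
  have : 0 < 1 - u := by linarith
  unfold kernel; positivity

lemma kernel_le (hκ : 0 ≤ κ) {u v : ℝ} (hu : 0 < u) (huv : u ≤ v) (hv : v < 1) :
    kernel κ u ≤ kernel κ v / v ^ (κ - 1) * u ^ (κ - 1) := by
  have hv0 : 0 < v := hu.trans_le huv
  have h1v : 0 < 1 - v := by linarith
  have hpow : (1 - u) ^ (-κ - 2) ≤ (1 - v) ^ (-κ - 2) :=
    rpow_le_rpow_of_nonpos h1v (by linarith) (by linarith)
  have hexp : exp (-κ / u) ≤ exp (-κ / v) := by
    rw [exp_le_exp, neg_div, neg_div, neg_le_neg_iff]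
    exact div_le_div_of_nonneg_left hκ hu huv
  calc kernel κ u = u ^ (κ - 1) * ((1 - u) ^ (-κ - 2) * exp (-κ / u)) := by
        rw [kernel, mul_assoc]
    _ ≤ u ^ (κ - 1) * ((1 - v) ^ (-κ - 2) * exp (-κ / v)) := by gcongr
    _ = kernel κ v / v ^ (κ - 1) * u ^ (κ - 1) := by
        rw [kernel]; field_simp

lemma integrableOn_kernel (hκ : 0 < κ) {v : ℝ} (hv0 : 0 < v) (hv1 : v < 1) :
    IntegrableOn (kernel κ) (Ioc 0 v) := by
  have hpow := integrableOn_Ioc_zero_rpow (r := κ - 1) (by linarith) hv0.le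
  refine integrableOn_of_continuousOn_of_norm_le continuousOn_kernel measurableSet_Ioc
    (fun u hu => ⟨hu.1, hu.2.trans_lt hv1⟩) (hpow.const_mul (kernel κ v / v ^ (κ - 1)))
    fun u hu => ?_
  rw [norm_of_nonneg (kernel_nonneg hu.1 (hu.2.trans_lt hv1))]
  exact kernel_le hκ.le hu.1 hu.2 hv1

lemma innerIntegral_le (hκ : 0 < κ) {v : ℝ} (hv0 : 0 < v) (hv1 : v < 1) :
    innerIntegral κ v ≤ v * kernel κ v / κ := by
  have hpow := integrableOn_Ioc_zero_rpow (r := κ - 1) (by linarith) hv0.le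
  calc innerIntegral κ v ≤ ∫ u in Ioc 0 v, kernel κ v / v ^ (κ - 1) * u ^ (κ - 1) :=
        setIntegral_mono_on (integrableOn_kernel hκ hv0 hv1) (hpow.const_mul _) measurableSet_Ioc
          fun u hu => kernel_le hκ.le hu.1 hu.2 hv1
    _ = kernel κ v / v ^ (κ - 1) * (v ^ κ / κ) := by
        rw [integral_const_mul, ← intervalIntegral.integral_of_le hv0.le,
          integral_rpow (Or.inl (by linarith)), sub_add_cancel, zero_rpow hκ.ne']
        ring
    _ = v * kernel κ v / κ := by
        rw [rpow_sub_one hv0.ne']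
        field_simp

lemma weight_mul_kernel {v : ℝ} (hv0 : 0 < v) (hv1 : v < 1) :
    weight κ v * kernel κ v = 1 / (v * (1 - v) ^ 2) := by
  have h1v : 0 < 1 - v := by linarith
  rw [weight, kernel, div_rpow h1v.le hv0.le, rpow_sub_one hv0.ne', rpow_sub h1v,
    rpow_neg h1v.le, rpow_two]
  field_simp
  rw [← exp_add, add_neg_cancel, exp_zero]

lemma hasDerivAt_innerIntegral (hκ : 0 < κ) {v : ℝ} (hv0 : 0 < v) (hv1 : v < 1) :
    HasDerivAt (innerIntegral κ) (kernel κ v) v :=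
  hasDerivAt_setIntegral_Ioc isOpen_Ioo continuousOn_kernel ⟨hv0, hv1⟩ hv0
    (integrableOn_kernel hκ hv0 hv1)

lemma hasDerivAt_weight {v : ℝ} (hv0 : 0 < v) (hv1 : v < 1) :
    HasDerivAt (weight κ) (-κ / (v ^ 2 * (1 - v)) * weight κ v) v := by
  have h1v : 0 < 1 - v := by linarith
  have hbase : 0 < (1 - v) / v := div_pos h1v hv0
  have hq : HasDerivAt (fun v : ℝ => (1 - v) / v) (-1 / v ^ 2) v :=
    (((hasDerivAt_id v).const_sub 1).div (hasDerivAt_id v) hv0.ne').congr_deriv (by simp; ring)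
  have he : HasDerivAt (fun v : ℝ => κ / v) (-κ / v ^ 2) v :=
    ((hasDerivAt_inv hv0.ne').const_mul κ).congr_deriv (by ring)
  refine ((hq.rpow_const (p := κ) (Or.inl hbase.ne')).mul he.exp).congr_deriv ?_
  rw [weight, rpow_sub hbase, rpow_one]
  field_simp
  ring

-- the equation `v²(1-v) g' + κ g = v/(1-v)` solved for `g'`
lemma hasDerivAt_outerIntegrand (hκ : 0 < κ) {v : ℝ} (hv0 : 0 < v) (hv1 : v < 1) :
    HasDerivAt (outerIntegrand κ)
      ((v / (1 - v) - κ * outerIntegrand κ v) / (v ^ 2 * (1 - v))) v := by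
  have h1v : 0 < 1 - v := by linarith
  refine ((hasDerivAt_weight hv0 hv1).mul (hasDerivAt_innerIntegral hκ hv0 hv1)).congr_deriv ?_
  rw [weight_mul_kernel hv0 hv1, outerIntegrand]
  field_simp
  ring

lemma continuousOn_outerIntegrand (hκ : 0 < κ) : ContinuousOn (outerIntegrand κ) (Ioo 0 1) :=
  fun _ hv => (hasDerivAt_outerIntegrand hκ hv.1 hv.2).continuousAt.continuousWithinAt

lemma outerIntegrand_nonneg {v : ℝ} (hv0 : 0 < v) (hv1 : v < 1) :
    0 ≤ outerIntegrand κ v := by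
  have h1v : 0 < 1 - v := by linarith
  exact mul_nonneg (by unfold weight; positivity) (setIntegral_nonneg measurableSet_Ioc
    fun u hu => kernel_nonneg hu.1 (hu.2.trans_lt hv1))

lemma outerIntegrand_le (hκ : 0 < κ) {v : ℝ} (hv0 : 0 < v) (hv1 : v < 1) :
    outerIntegrand κ v ≤ 1 / ((1 - v) ^ 2 * κ) := by
  have h1v : 0 < 1 - v := by linarith
  calc outerIntegrand κ v ≤ weight κ v * (v * kernel κ v / κ) := by
        unfold outerIntegrand
        gcongr
        · unfold weight; positivity
        · exact innerIntegral_le hκ hv0 hv1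
    _ = v * (weight κ v * kernel κ v) / κ := by ring
    _ = 1 / ((1 - v) ^ 2 * κ) := by
        rw [weight_mul_kernel hv0 hv1]
        field_simp

lemma integrableOn_outerIntegrand (hκ : 0 < κ) {y : ℝ} (hy1 : y < 1) :
    IntegrableOn (outerIntegrand κ) (Ioc 0 y) := by
  refine integrableOn_of_continuousOn_of_norm_le (continuousOn_outerIntegrand hκ)
    measurableSet_Ioc (fun v hv => ⟨hv.1, hv.2.trans_lt hy1⟩)
    (integrableOn_const (C := 1 / ((1 - y) ^ 2 * κ)) measure_Ioc_lt_top.ne) fun v hv => ?_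
  have hv1 : v < 1 := hv.2.trans_lt hy1
  have h1y : 0 < 1 - y := by linarith
  rw [norm_of_nonneg (outerIntegrand_nonneg hv.1 hv1)]
  refine (outerIntegrand_le hκ hv.1 hv1).trans ?_
  gcongr
  linarith [hv.2]

lemma hasDerivAt_outerIntegral (hκ : 0 < κ) {y : ℝ} (hy0 : 0 < y) (hy1 : y < 1) :
    HasDerivAt (outerIntegral κ) (outerIntegrand κ y) y :=
  hasDerivAt_setIntegral_Ioc isOpen_Ioo (continuousOn_outerIntegrand hκ) ⟨hy0, hy1⟩ hy0
    (integrableOn_outerIntegrand hκ hy1)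

def profile (κ x : ℝ) : ℝ := (1 + x) * outerIntegral κ (x / (1 + x))

def profileDeriv (κ x : ℝ) : ℝ :=
  outerIntegral κ (x / (1 + x)) + outerIntegrand κ (x / (1 + x)) / (1 + x)

def profileDeriv2 (κ x : ℝ) : ℝ := (x - κ * outerIntegrand κ (x / (1 + x))) / x ^ 2

lemma div_one_add_mem_Ioo {x : ℝ} (hx : 0 < x) : x / (1 + x) ∈ Ioo 0 1 :=
  ⟨by positivity, (div_lt_one (by positivity)).2 (by linarith)⟩

lemma hasDerivAt_div_one_add {x : ℝ} (hx : 1 + x ≠ 0) :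
    HasDerivAt (fun x : ℝ => x / (1 + x)) (1 / (1 + x) ^ 2) x :=
  ((hasDerivAt_id x).div ((hasDerivAt_id x).const_add 1) hx).congr_deriv (by simp)

lemma hasDerivAt_profile (hκ : 0 < κ) {x : ℝ} (hx : 0 < x) :
    HasDerivAt (profile κ) (profileDeriv κ x) x := by
  obtain ⟨hy0, hy1⟩ := div_one_add_mem_Ioo hx
  have hF := (hasDerivAt_outerIntegral hκ hy0 hy1).comp x
    (hasDerivAt_div_one_add (by positivity : 1 + x ≠ 0))
  refine (((hasDerivAt_id x).const_add 1).mul hF).congr_deriv ?_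
  simp only [Function.comp_apply, id, profileDeriv]
  field_simp

lemma hasDerivAt_profileDeriv (hκ : 0 < κ) {x : ℝ} (hx : 0 < x) :
    HasDerivAt (profileDeriv κ) (profileDeriv2 κ x) x := by
  obtain ⟨hy0, hy1⟩ := div_one_add_mem_Ioo hx
  have hy := hasDerivAt_div_one_add (by positivity : 1 + x ≠ 0)
  have hF := (hasDerivAt_outerIntegral hκ hy0 hy1).comp x hy
  have hg := (hasDerivAt_outerIntegrand hκ hy0 hy1).comp x hy
  refine (hF.add (hg.div ((hasDerivAt_id x).const_add 1) (by positivity))).congr_deriv ?_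
  have h1y : 1 - x / (1 + x) = 1 / (1 + x) := by field_simp; ring
  simp only [Function.comp_apply, id, profileDeriv2, h1y]
  field_simp
  ring

lemma continuousOn_profileDeriv2 (hκ : 0 < κ) : ContinuousOn (profileDeriv2 κ) (Ioi 0) := by
  have hy : ContinuousOn (fun x : ℝ => x / (1 + x)) (Ioi 0) := fun x hx =>
    (hasDerivAt_div_one_add (by linarith [mem_Ioi.1 hx])).continuousAt.continuousWithinAt
  refine ContinuousOn.div (continuousOn_id.sub (continuousOn_const.mul
    ((continuousOn_outerIntegrand hκ).comp hy fun x hx => div_one_add_mem_Ioo hx)))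
    (continuousOn_id.pow 2) fun x hx => pow_ne_zero 2 (ne_of_gt hx)

lemma profile_ode {x : ℝ} (hx : 0 < x) :
    κ * (1 + x) * profileDeriv κ x + x ^ 2 * profileDeriv2 κ x - κ * profile κ x = x := by
  rw [profile, profileDeriv, profileDeriv2]
  field_simp
  ring

variable {ν lam : ℝ}

lemma eq_profile (ν lam : ℝ) : Mtilde ν lam = fun x => 2 / ν * profile (2 * lam / ν) x := by
  funext x
  rw [Mtilde, mul_assoc]
  rfl

lemma hasDerivAt (hν : 0 < ν) (hlam : 0 < lam) {x : ℝ} (hx : 0 < x) :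
    HasDerivAt (Mtilde ν lam) (2 / ν * profileDeriv (2 * lam / ν) x) x := by
  rw [eq_profile]
  exact (hasDerivAt_profile (κ := 2 * lam / ν) (by positivity) hx).const_mul (2 / ν)

lemma hasDerivAt_const_mul_profileDeriv (hν : 0 < ν) (hlam : 0 < lam) {x : ℝ} (hx : 0 < x) :
    HasDerivAt (fun x => 2 / ν * profileDeriv (2 * lam / ν) x)
      (2 / ν * profileDeriv2 (2 * lam / ν) x) x :=
  (hasDerivAt_profileDeriv (κ := 2 * lam / ν) (by positivity) hx).const_mul (2 / ν)

lemma contDiffOn (hν : 0 < ν) (hlam : 0 < lam) : ContDiffOn ℝ 2 (Mtilde ν lam) (Ioi 0) :=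
  contDiffOn_two_of_hasDerivAt isOpen_Ioi (fun _ hx => hasDerivAt hν hlam hx)
    (fun _ hx => hasDerivAt_const_mul_profileDeriv hν hlam hx)
    (continuousOn_const.mul (continuousOn_profileDeriv2 (κ := 2 * lam / ν) (by positivity)))

lemma ode (hν : ν ≠ 0) {x : ℝ} (hx : 0 < x) :
    lam * (1 + x) * (2 / ν * profileDeriv (2 * lam / ν) x) +
        ν / 2 * x ^ 2 * (2 / ν * profileDeriv2 (2 * lam / ν) x) - lam * Mtilde ν lam x = x := by
  rw [eq_profile]
  convert profile_ode (κ := 2 * lam / ν) hx using 1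
  field_simp

end Mtilde

theorem M_solves_pde_general
    (n k N : ℕ) (hk : 1 ≤ k)
    (S : Fin N → Finset (Fin n))
    (hScard : ∀ i, (S i).card = k)
    (μ lam c : ℝ) (hμ : μ ≠ 0) (hlam : 0 < lam)
    (p : Fin N → ℝ) :
    ContDiffOn ℝ 2 (MM ((k : ℝ) * μ ^ 2) lam c p) {φ : Fin N → ℝ | ∀ i, 0 < φ i} ∧
    ∀ φ : Fin N → ℝ, (∀ i, 0 < φ i) →
      genLPhi lam μ S (MM ((k : ℝ) * μ ^ 2) lam c p) φ -
          lam * MM ((k : ℝ) * μ ^ 2) lam c p φ =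
        (∑ i, p i * φ i) - lam / c := by
  have hν : 0 < (k : ℝ) * μ ^ 2 := by
    have : (0 : ℝ) < k := by exact_mod_cast hk
    positivity
  refine ⟨contDiffOn_sum_mul_comp (Mtilde.contDiffOn hν hlam), fun φ hφ => ?_⟩
  unfold MM
  rw [genLPhi_sum_mul_comp_sub lam μ S (fun _ => Mtilde.hasDerivAt hν hlam)
    (fun _ => Mtilde.hasDerivAt_const_mul_profileDeriv hν hlam) hφ, mul_one_div]
  congr 1
  refine Finset.sum_congr rfl fun i _ => ?_
  rw [hScard]
  linear_combination p i * Mtilde.ode (lam := lam) hν.ne' (hφ i)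

theorem M_solves_pde
    (n k N : ℕ) (hk : 1 ≤ k) (hkn : k < n) (hN : N = n.choose k)
    (S : Fin N → Finset (Fin n)) (hSinj : Function.Injective S)
    (hScard : ∀ i, (S i).card = k)
    (μ lam c : ℝ) (hμ : μ ≠ 0) (hlam : 0 < lam) (hc : 0 < c)
    (p : Fin N → ℝ) (hp : ∀ i, p i ∈ Set.Icc (0 : ℝ) 1) (hpsum : ∑ i, p i = 1) :
    ContDiffOn ℝ 2 (MM ((k : ℝ) * μ ^ 2) lam c p) {φ : Fin N → ℝ | ∀ i, 0 < φ i} ∧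
    ∀ φ : Fin N → ℝ, (∀ i, 0 < φ i) →
      genLPhi lam μ S (MM ((k : ℝ) * μ ^ 2) lam c p) φ -
          lam * MM ((k : ℝ) * μ ^ 2) lam c p φ =
        (∑ i, p i * φ i) - lam / c :=
  M_solves_pde_general n k N hk S hScard μ lam c hμ hlam p

end
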